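/- For every integer ℓ ≥ 1, the formal power series P_ℓ = Σ_{ν=0}^{∞} q^{νℓ} (1−q^ℓ)(1−q^{ℓ+1})⋯(1−q^{ℓ+ν}) in ℤ[[q]] equals Σ_{n=0}^{∞} (−1)^n q^{3ℓn + n(3n+1)/2} (1 − q^{2ℓ+2n+1}). -/

import Mathlib

/-- The sum `∑_{ν=0}^∞ f ν` of a family of power series in `ℤ[[q]]` whose `ν`-th member
has `q`-adic order at least `ν`: its coefficient at `q^d` is the (finite) sum of the
coefficients at `q^d` of `f 0, …, f d`. -/
noncomputable def seriesSum (f : ℕ → PowerSeries ℤ) : PowerSeries ℤ :=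
  PowerSeries.mk fun d => PowerSeries.coeff (R := ℤ) d (∑ ν ∈ Finset.range (d + 1), f ν)

/-- Euler's tower: `P_ℓ = ∑_{ν=0}^∞ q^{νℓ} (1-q^ℓ)(1-q^{ℓ+1})⋯(1-q^{ℓ+ν}) ∈ ℤ[[q]]`. -/
noncomputable def eulerP (n : ℕ) : PowerSeries ℤ :=
  seriesSum fun ν =>
    PowerSeries.X ^ (ν * n) * ∏ i ∈ Finset.range (ν + 1), (1 - PowerSeries.X ^ (n + i))

/-!
Both sides satisfy the recursion `F_ℓ = 1 - q^{2ℓ+1} - q^{3ℓ+2} F_{ℓ+1}`, and since the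
coefficient `q^{3ℓ+2}` has positive order, this recursion determines `F_ℓ` for `ℓ ≥ 1`: the
difference `D_ℓ` of the two sides satisfies `D_ℓ = -q^{3ℓ+2} D_{ℓ+1}`, so it is divisible by
every power of `q`. For the closed form the recursion is a shift of the summation index.
For `P_ℓ` it comes from writing the `ν`-th summand, with `A_ν = (1-q^{ℓ+1})⋯(1-q^{ℓ+ν})`, as
`q^{νℓ} A_ν - q^{(ν+1)ℓ} A_{ν+1} - q^{(ν+2)ℓ+ν+1} A_ν`: the first two parts telescope and
for `ν ≥ 1` the last one is `q^{3ℓ+2}` times the `(ν-1)`-th summand of `P_{ℓ+1}`.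
-/

open PowerSeries Finset
open scoped PowerSeries

namespace PowerSeries

variable {R : Type*} [CommRing R]

theorem eq_of_forall_X_pow_dvd_sub {a b : R⟦X⟧} (h : ∀ N, (X : R⟦X⟧) ^ N ∣ a - b) : a = b := by
  refine sub_eq_zero.mp (ext fun n => ?_)
  rw [map_zero]
  exact X_pow_dvd_iff.mp (h (n + 1)) n n.lt_succ_self

theorem eq_zero_of_forall_X_mul_succ_dvd {D : ℕ → R⟦X⟧} (h : ∀ ℓ, X * D (ℓ + 1) ∣ D ℓ) :
    D = 0 := by
  have hpow : ∀ N ℓ, (X : R⟦X⟧) ^ N ∣ D ℓ := by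
    intro N
    induction N with
    | zero => simp
    | succ N ih =>
      intro ℓ
      rw [pow_succ']
      exact (mul_dvd_mul_left X (ih (ℓ + 1))).trans (h ℓ)
  exact funext fun ℓ => eq_of_forall_X_pow_dvd_sub fun N => by simpa using hpow N ℓ

end PowerSeries

theorem X_pow_dvd_seriesSum_sub_sum {f : ℕ → ℤ⟦X⟧} (hf : ∀ ν, X ^ ν ∣ f ν) (N : ℕ) :
    X ^ N ∣ seriesSum f - ∑ ν ∈ range N, f ν := by
  refine X_pow_dvd_iff.mpr fun d hd => ?_
  have htail : X ^ (d + 1) ∣ ∑ ν ∈ Ico (d + 1) N, f ν :=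
    dvd_sum fun ν hν => (pow_dvd_pow X (mem_Ico.mp hν).1).trans (hf ν)
  rw [map_sub, seriesSum, coeff_mk, ← sum_range_add_sum_Ico f (show d + 1 ≤ N by omega),
    map_add, X_pow_dvd_iff.mp htail d d.lt_succ_self, add_zero, sub_self]

theorem seriesSum_eq_add_mul_seriesSum {f g : ℕ → ℤ⟦X⟧} (hf : ∀ ν, X ^ ν ∣ f ν)
    (hg : ∀ ν, X ^ ν ∣ g ν) {a b : ℤ⟦X⟧} {r : ℕ → ℤ⟦X⟧} (hr : ∀ N, X ^ N ∣ r N)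
    (h : ∀ N, ∑ ν ∈ range (N + 1), f ν = a + b * ∑ ν ∈ range N, g ν + r N) :
    seriesSum f = a + b * seriesSum g := by
  refine eq_of_forall_X_pow_dvd_sub fun N => ?_
  have hsplit : seriesSum f - (a + b * seriesSum g) = (seriesSum f - ∑ ν ∈ range (N + 1), f ν)
      - b * (seriesSum g - ∑ ν ∈ range N, g ν) + r N := by
    rw [h]; ring
  rw [hsplit]
  exact dvd_add (dvd_sub ((pow_dvd_pow X N.le_succ).trans (X_pow_dvd_seriesSum_sub_sum hf _))
    (dvd_mul_of_dvd_right (X_pow_dvd_seriesSum_sub_sum hg N) b)) (hr N)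

noncomputable def qPochhammer (ℓ k : ℕ) : ℤ⟦X⟧ :=
  ∏ i ∈ range k, (1 - X ^ (ℓ + i))

theorem qPochhammer_zero (ℓ : ℕ) : qPochhammer ℓ 0 = 1 := prod_range_zero _

theorem qPochhammer_succ (ℓ k : ℕ) : qPochhammer ℓ (k + 1) = qPochhammer ℓ k * (1 - X ^ (ℓ + k)) :=
  prod_range_succ _ _

theorem qPochhammer_succ' (ℓ k : ℕ) :
    qPochhammer ℓ (k + 1) = qPochhammer (ℓ + 1) k * (1 - X ^ ℓ) := by
  simp only [qPochhammer, prod_range_succ', add_zero, add_right_comm ℓ 1, add_assoc]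

theorem eulerP_eq_seriesSum_qPochhammer (ℓ : ℕ) :
    eulerP ℓ = seriesSum fun ν => X ^ (ν * ℓ) * qPochhammer ℓ (ν + 1) := rfl

theorem sum_range_X_pow_mul_qPochhammer (ℓ N : ℕ) :
    ∑ ν ∈ range (N + 1), X ^ (ν * ℓ) * qPochhammer ℓ (ν + 1) =
      (1 - X ^ (2 * ℓ + 1)) - X ^ (3 * ℓ + 2) *
        ∑ ν ∈ range N, X ^ (ν * (ℓ + 1)) * qPochhammer (ℓ + 1) (ν + 1)
        - X ^ ((N + 1) * ℓ) * qPochhammer (ℓ + 1) (N + 1) := by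
  induction N with
  | zero =>
    rw [zero_add, sum_range_one, sum_range_zero, qPochhammer_succ', qPochhammer_succ,
      qPochhammer_zero]
    ring
  | succ N ih =>
    rw [sum_range_succ, ih, sum_range_succ, qPochhammer_succ' ℓ (N + 1),
      qPochhammer_succ (ℓ + 1) (N + 1), qPochhammer_succ (ℓ + 1) N]
    ring

theorem eulerP_eq_sub (ℓ : ℕ) (hℓ : 1 ≤ ℓ) :
    eulerP ℓ = (1 - X ^ (2 * ℓ + 1)) - X ^ (3 * ℓ + 2) * eulerP (ℓ + 1) := by
  have hdvd : ∀ m, 1 ≤ m → ∀ ν, X ^ ν ∣ X ^ (ν * m) * qPochhammer m (ν + 1) := fun m hm ν =>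
    dvd_mul_of_dvd_left (pow_dvd_pow X (Nat.le_mul_of_pos_right ν hm)) _
  rw [eulerP_eq_seriesSum_qPochhammer, eulerP_eq_seriesSum_qPochhammer, sub_eq_add_neg,
    ← neg_mul]
  refine seriesSum_eq_add_mul_seriesSum (hdvd ℓ hℓ) (hdvd (ℓ + 1) (by omega))
    (r := fun N => -(X ^ ((N + 1) * ℓ) * qPochhammer (ℓ + 1) (N + 1)))
    (fun N => (dvd_mul_of_dvd_left (pow_dvd_pow X (by nlinarith)) _).neg_right) fun N => ?_
  rw [sum_range_X_pow_mul_qPochhammer]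
  ring

noncomputable def pentagonalTerm (ℓ n : ℕ) : ℤ⟦X⟧ :=
  (-1) ^ n * X ^ (3 * ℓ * n + n * (3 * n + 1) / 2) * (1 - X ^ (2 * ℓ + 2 * n + 1))

theorem X_pow_dvd_pentagonalTerm (ℓ n : ℕ) : X ^ n ∣ pentagonalTerm ℓ n := by
  refine dvd_mul_of_dvd_left (dvd_mul_of_dvd_right (pow_dvd_pow X ?_) _) _
  have : n ≤ n * (3 * n + 1) / 2 :=
    (Nat.le_div_iff_mul_le two_pos).mpr (by nlinarith [Nat.le_mul_self n])
  omega

theorem pentagonalTerm_zero (ℓ : ℕ) : pentagonalTerm ℓ 0 = 1 - X ^ (2 * ℓ + 1) := by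
  simp [pentagonalTerm]

theorem pentagonalTerm_succ (ℓ n : ℕ) :
    pentagonalTerm ℓ (n + 1) = -(X ^ (3 * ℓ + 2) * pentagonalTerm (ℓ + 1) n) := by
  have hpent : (n + 1) * (3 * (n + 1) + 1) / 2 = n * (3 * n + 1) / 2 + (3 * n + 2) := by
    rw [show (n + 1) * (3 * (n + 1) + 1) = n * (3 * n + 1) + 2 * (3 * n + 2) by ring,
      Nat.add_mul_div_left _ _ two_pos]
  rw [pentagonalTerm, pentagonalTerm, hpent,
    show 2 * ℓ + 2 * (n + 1) + 1 = 2 * (ℓ + 1) + 2 * n + 1 by ring]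
  ring

theorem seriesSum_pentagonalTerm_eq_sub (ℓ : ℕ) :
    seriesSum (pentagonalTerm ℓ) =
      (1 - X ^ (2 * ℓ + 1)) - X ^ (3 * ℓ + 2) * seriesSum (pentagonalTerm (ℓ + 1)) := by
  rw [sub_eq_add_neg, ← neg_mul]
  refine seriesSum_eq_add_mul_seriesSum (X_pow_dvd_pentagonalTerm ℓ)
    (X_pow_dvd_pentagonalTerm (ℓ + 1)) (r := 0) (fun _ => dvd_zero _) fun N => ?_
  simp only [sum_range_succ', pentagonalTerm_succ, pentagonalTerm_zero, sum_neg_distrib,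
    ← mul_sum, Pi.zero_apply]
  ring

/-- For every `ℓ ≥ 1`,
`P_ℓ = ∑_{n=0}^∞ (-1)^n q^{3ℓn + n(3n+1)/2} (1 - q^{2ℓ+2n+1})` in `ℤ[[q]]`. -/
theorem eulerP_closed_form (ℓ : ℕ) (hℓ : 1 ≤ ℓ) :
    eulerP ℓ =
      seriesSum fun n =>
        (-1) ^ n * PowerSeries.X ^ (3 * ℓ * n + n * (3 * n + 1) / 2)
          * (1 - PowerSeries.X ^ (2 * ℓ + 2 * n + 1)) := by
  obtain ⟨m, rfl⟩ := Nat.exists_eq_add_of_le' hℓ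
  have hdiff := eq_zero_of_forall_X_mul_succ_dvd
    (D := fun m => eulerP (m + 1) - seriesSum (pentagonalTerm (m + 1))) fun m => by
      refine ⟨-X ^ (3 * m + 4), ?_⟩
      rw [eulerP_eq_sub (m + 1) (by omega), seriesSum_pentagonalTerm_eq_sub]
      ring
  exact sub_eq_zero.mp (congrFun hdiff m)
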